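/- Let n ≥ 3 and define G : ℕ → ℕ by G(x) = mex {G(x-s) : s ∈ {2, 4n, 4n+2}, s ≤ x}. Then for all k, m ∈ ℕ with m ≤ n-1 and t ∈ {2,3}, we have G(8nk + 4n + 4m + t) = 3. -/
import Mathlib

noncomputable def mex (T : Set ℕ) : ℕ := sInf {k : ℕ | k ∉ T}

def subRec (n : ℕ) (G : ℕ → ℕ) : Prop :=
  ∀ x : ℕ, G x = mex {y : ℕ | ∃ s ∈ ({2, 4*n, 4*n+2} : Set ℕ), s ≤ x ∧ y = G (x - s)}

def passRec (n : ℕ) (G0 G1 : ℕ → ℕ) : Prop :=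
  G1 0 = 0 ∧ G1 1 = 0 ∧
  ∀ x : ℕ, 2 ≤ x →
    G1 x = mex ({y : ℕ | ∃ s ∈ ({2, 4*n, 4*n+2} : Set ℕ), s ≤ x ∧ y = G1 (x - s)} ∪ {G0 x})

lemma mex_eq (T : Set ℕ) (a : ℕ) (h1 : a ∉ T) (h2 : ∀ b, b < a → b ∈ T) : mex T = a := by
  have ha : a ∈ {k : ℕ | k ∉ T} := h1
  refine le_antisymm (Nat.sInf_le ha) ?_
  by_contra h
  push_neg at h
  exact (Nat.sInf_mem ⟨a, ha⟩) (h2 _ h)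

def gval (n r : ℕ) : ℕ :=
  if r < 4*n then (if r % 4 < 2 then 0 else 1) else if r % 4 < 2 then 2 else 3

lemma gval0 (n r : ℕ) (h1 : r < 4*n) (h2 : r % 4 < 2) : gval n r = 0 := by
  simp only [gval]; rw [if_pos h1, if_pos h2]
lemma gval1 (n r : ℕ) (h1 : r < 4*n) (h2 : 2 ≤ r % 4) : gval n r = 1 := by
  simp only [gval]; rw [if_pos h1, if_neg (by omega)]
lemma gval2 (n r : ℕ) (h1 : 4*n ≤ r) (h2 : r % 4 < 2) : gval n r = 2 := by
  simp only [gval]; rw [if_neg (by omega), if_pos h2]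
lemma gval3 (n r : ℕ) (h1 : 4*n ≤ r) (h2 : 2 ≤ r % 4) : gval n r = 3 := by
  simp only [gval]; rw [if_neg (by omega), if_neg (by omega)]

lemma setA (n x : ℕ) (G : ℕ → ℕ) (hn : 1 ≤ n) (h : x < 2) :
    {y : ℕ | ∃ s ∈ ({2, 4*n, 4*n+2} : Set ℕ), s ≤ x ∧ y = G (x - s)} = ∅ := by
  ext y
  simp only [Set.mem_setOf_eq, Set.mem_insert_iff, Set.mem_singleton_iff, Set.mem_empty_iff_false,
    iff_false]
  rintro ⟨s, hs | hs | hs, hsx, -⟩ <;> omega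

lemma setB (n x : ℕ) (G : ℕ → ℕ) (h1 : 2 ≤ x) (h2 : x < 4*n) :
    {y : ℕ | ∃ s ∈ ({2, 4*n, 4*n+2} : Set ℕ), s ≤ x ∧ y = G (x - s)} = {G (x - 2)} := by
  ext y
  simp only [Set.mem_setOf_eq, Set.mem_insert_iff, Set.mem_singleton_iff]
  constructor
  · rintro ⟨s, hs | hs | hs, hsx, rfl⟩
    · subst hs; rfl
    · exact absurd hsx (by omega)
    · exact absurd hsx (by omega)
  · rintro rfl
    exact ⟨2, Or.inl rfl, by omega, rfl⟩

lemma setC (n x : ℕ) (G : ℕ → ℕ) (hn : 1 ≤ n) (h1 : 4*n ≤ x) (h2 : x < 4*n+2) :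
    {y : ℕ | ∃ s ∈ ({2, 4*n, 4*n+2} : Set ℕ), s ≤ x ∧ y = G (x - s)} =
      {G (x - 2), G (x - 4*n)} := by
  ext y
  simp only [Set.mem_setOf_eq, Set.mem_insert_iff, Set.mem_singleton_iff]
  constructor
  · rintro ⟨s, hs | hs | hs, hsx, rfl⟩
    · subst hs; exact Or.inl rfl
    · subst hs; exact Or.inr rfl
    · exact absurd hsx (by omega)
  · rintro (rfl | rfl)
    · exact ⟨2, Or.inl rfl, by omega, rfl⟩
    · exact ⟨4*n, Or.inr (Or.inl rfl), by omega, rfl⟩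

lemma setD (n x : ℕ) (G : ℕ → ℕ) (h : 4*n+2 ≤ x) :
    {y : ℕ | ∃ s ∈ ({2, 4*n, 4*n+2} : Set ℕ), s ≤ x ∧ y = G (x - s)} =
      {G (x - 2), G (x - 4*n), G (x - (4*n+2))} := by
  ext y
  simp only [Set.mem_setOf_eq, Set.mem_insert_iff, Set.mem_singleton_iff]
  constructor
  · rintro ⟨s, hs | hs | hs, hsx, rfl⟩
    · subst hs; exact Or.inl rfl
    · subst hs; exact Or.inr (Or.inl rfl)
    · subst hs; exact Or.inr (Or.inr rfl)
  · rintro (rfl | rfl | rfl)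
    · exact ⟨2, Or.inl rfl, by omega, rfl⟩
    · exact ⟨4*n, Or.inr (Or.inl rfl), by omega, rfl⟩
    · exact ⟨4*n+2, Or.inr (Or.inr rfl), by omega, rfl⟩

lemma key (n : ℕ) (hn : 3 ≤ n) (G : ℕ → ℕ) (hG : subRec n G) :
    ∀ x k r : ℕ, r < 8*n → x = 8*n*k + r → G x = gval n r := by
  intro x
  induction x using Nat.strong_induction_on with
  | _ x ih =>
  intro k r hr hx
  have hk0 : ∀ j : ℕ, 8*n*(j+1) = 8*n*j + 8*n := fun j => by ring
  rcases Nat.lt_or_ge x 2 with hA | hA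
  · -- empty set
    have hk : k = 0 := by
      rcases k with _ | j
      · rfl
      · have := hk0 j; omega
    subst hk
    rw [hG x, setA n x G (by omega) hA, mex_eq _ 0 (by simp) (fun b hb => absurd hb (Nat.not_lt_zero b))]
    exact (gval0 n r (by omega) (by omega)).symm
  rcases Nat.lt_or_ge x (4*n) with hB | hB
  · -- only subtract 2
    have hk : k = 0 := by
      rcases k with _ | j
      · rfl
      · have := hk0 j; omega
    subst hk
    have hrx : r = x := by omega
    have e2 : G (x - 2) = gval n (r - 2) := ih (x - 2) (by omega) 0 (r - 2) (by omega) (by omega)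
    rw [hG x, setB n x G hA hB, e2]
    rcases Nat.lt_or_ge (r % 4) 2 with h4 | h4
    · rw [gval1 n (r-2) (by omega) (by omega)]
      rw [mex_eq _ 0 (by simp) (fun b hb => absurd hb (Nat.not_lt_zero b))]
      exact (gval0 n r (by omega) h4).symm
    · rw [gval0 n (r-2) (by omega) (by omega)]
      rw [mex_eq _ 1 (by simp) (by intro b hb; interval_cases b <;> simp)]
      exact (gval1 n r (by omega) h4).symm
  rcases Nat.lt_or_ge x (4*n+2) with hC | hC
  · -- subtract 2 or 4n
    have hk : k = 0 := by
      rcases k with _ | j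
      · rfl
      · have := hk0 j; omega
    subst hk
    have hrx : r = x := by omega
    have e2 : G (x - 2) = 1 := by
      rw [ih (x - 2) (by omega) 0 (r - 2) (by omega) (by omega)]
      exact gval1 n (r-2) (by omega) (by omega)
    have e4 : G (x - 4*n) = 0 := by
      rw [ih (x - 4*n) (by omega) 0 (r - 4*n) (by omega) (by omega)]
      exact gval0 n (r-4*n) (by omega) (by omega)
    rw [hG x, setC n x G (by omega) hB hC, e2, e4]
    rw [mex_eq _ 2 (by simp) (by intro b hb; interval_cases b <;> simp)]
    exact (gval2 n r (by omega) (by omega)).symm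
  · -- all three moves
    rcases Nat.lt_or_ge r (4*n+2) with hr1 | hr1
    · -- k ≥ 1
      obtain ⟨j, rfl⟩ : ∃ j, k = j + 1 := by
        rcases k with _ | j
        · exact absurd hx (by omega)
        · exact ⟨j, rfl⟩
      have h8 : 8*n*(j+1) = 8*n*j + 8*n := hk0 j
      rcases Nat.lt_or_ge r 2 with hcase | hcase
      · -- region 1 : r < 2, values {3,2,1}, mex = 0
        have e2 : G (x - 2) = 3 := by
          rw [ih (x - 2) (by omega) j (8*n + r - 2) (by omega) (by omega)]
          exact gval3 n _ (by omega) (by omega)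
        have e4 : G (x - 4*n) = 2 := by
          rw [ih (x - 4*n) (by omega) j (r + 4*n) (by omega) (by omega)]
          exact gval2 n _ (by omega) (by omega)
        have e6 : G (x - (4*n+2)) = 1 := by
          rw [ih (x - (4*n+2)) (by omega) j (r + 4*n - 2) (by omega) (by omega)]
          exact gval1 n _ (by omega) (by omega)
        rw [hG x, setD n x G hC, e2, e4, e6]
        rw [mex_eq _ 0 (by simp) (fun b hb => absurd hb (Nat.not_lt_zero b))]
        exact (gval0 n r (by omega) (by omega)).symm
      rcases Nat.lt_or_ge r (4*n) with hcase2 | hcase2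
      · rcases Nat.lt_or_ge (r % 4) 2 with h4 | h4
        · -- region 3 : values {1,2,3}, mex = 0
          have e2 : G (x - 2) = 1 := by
            rw [ih (x - 2) (by omega) (j+1) (r - 2) (by omega) (by omega)]
            exact gval1 n _ (by omega) (by omega)
          have e4 : G (x - 4*n) = 2 := by
            rw [ih (x - 4*n) (by omega) j (r + 4*n) (by omega) (by omega)]
            exact gval2 n _ (by omega) (by omega)
          have e6 : G (x - (4*n+2)) = 3 := by
            rw [ih (x - (4*n+2)) (by omega) j (r + 4*n - 2) (by omega) (by omega)]
            exact gval3 n _ (by omega) (by omega)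
          rw [hG x, setD n x G hC, e2, e4, e6]
          rw [mex_eq _ 0 (by simp) (fun b hb => absurd hb (Nat.not_lt_zero b))]
          exact (gval0 n r (by omega) h4).symm
        · -- region 2 : values {0,3,2}, mex = 1
          have e2 : G (x - 2) = 0 := by
            rw [ih (x - 2) (by omega) (j+1) (r - 2) (by omega) (by omega)]
            exact gval0 n _ (by omega) (by omega)
          have e4 : G (x - 4*n) = 3 := by
            rw [ih (x - 4*n) (by omega) j (r + 4*n) (by omega) (by omega)]
            exact gval3 n _ (by omega) (by omega)
          have e6 : G (x - (4*n+2)) = 2 := by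
            rw [ih (x - (4*n+2)) (by omega) j (r + 4*n - 2) (by omega) (by omega)]
            exact gval2 n _ (by omega) (by omega)
          rw [hG x, setD n x G hC, e2, e4, e6]
          rw [mex_eq _ 1 (by simp) (by intro b hb; interval_cases b <;> simp)]
          exact (gval1 n r (by omega) h4).symm
      · -- region 4 : 4n ≤ r < 4n+2, values {1,0,3}, mex = 2
        have e2 : G (x - 2) = 1 := by
          rw [ih (x - 2) (by omega) (j+1) (r - 2) (by omega) (by omega)]
          exact gval1 n _ (by omega) (by omega)
        have e4 : G (x - 4*n) = 0 := by
          rw [ih (x - 4*n) (by omega) (j+1) (r - 4*n) (by omega) (by omega)]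
          exact gval0 n _ (by omega) (by omega)
        have e6 : G (x - (4*n+2)) = 3 := by
          rw [ih (x - (4*n+2)) (by omega) j (r + 4*n - 2) (by omega) (by omega)]
          exact gval3 n _ (by omega) (by omega)
        rw [hG x, setD n x G hC, e2, e4, e6]
        rw [mex_eq _ 2 (by simp) (by intro b hb; interval_cases b <;> simp)]
        exact (gval2 n r (by omega) (by omega)).symm
    · -- r ≥ 4n+2, same k throughout
      rcases Nat.lt_or_ge (r % 4) 2 with h4 | h4
      · -- region 6 : values {3,0,1}, mex = 2
        have e2 : G (x - 2) = 3 := by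
          rw [ih (x - 2) (by omega) k (r - 2) (by omega) (by omega)]
          exact gval3 n _ (by omega) (by omega)
        have e4 : G (x - 4*n) = 0 := by
          rw [ih (x - 4*n) (by omega) k (r - 4*n) (by omega) (by omega)]
          exact gval0 n _ (by omega) (by omega)
        have e6 : G (x - (4*n+2)) = 1 := by
          rw [ih (x - (4*n+2)) (by omega) k (r - 4*n - 2) (by omega) (by omega)]
          exact gval1 n _ (by omega) (by omega)
        rw [hG x, setD n x G (by omega), e2, e4, e6]
        rw [mex_eq _ 2 (by simp) (by intro b hb; interval_cases b <;> simp)]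
        exact (gval2 n r (by omega) h4).symm
      · -- region 5 : values {2,1,0}, mex = 3
        have e2 : G (x - 2) = 2 := by
          rw [ih (x - 2) (by omega) k (r - 2) (by omega) (by omega)]
          exact gval2 n _ (by omega) (by omega)
        have e4 : G (x - 4*n) = 1 := by
          rw [ih (x - 4*n) (by omega) k (r - 4*n) (by omega) (by omega)]
          exact gval1 n _ (by omega) (by omega)
        have e6 : G (x - (4*n+2)) = 0 := by
          rw [ih (x - (4*n+2)) (by omega) k (r - 4*n - 2) (by omega) (by omega)]
          exact gval0 n _ (by omega) (by omega)
        rw [hG x, setD n x G (by omega), e2, e4, e6]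
        rw [mex_eq _ 3 (by simp) (by intro b hb; interval_cases b <;> simp)]
        exact (gval3 n r (by omega) h4).symm

theorem stmt (n : ℕ) (hn : 3 ≤ n) (G : ℕ → ℕ) (hG : subRec n G) :
    ∀ k m t : ℕ, m ≤ n - 1 → (t = 2 ∨ t = 3) → G (8*n*k + 4*n + 4*m + t) = 3 := by
  intro k m t hm ht
  have hkey := key n hn G hG (8*n*k + 4*n + 4*m + t) k (4*n + 4*m + t)
    (by omega) (by omega)
  rw [hkey]
  exact gval3 n _ (by omega) (by omega)
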